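/- Let z be the standard Gaussian measure on ℝ and μ ∈ ℝ. There exists a polynomial ξ of degree at most 2 that is nonnegative on ℝ and satisfies ∫ ξ dz = 1 and ∫ t ξ dz = μ if and only if -1 ≤ μ ≤ 1. -/

import Mathlib

/-!
Against the standard Gaussian the moments of `t ↦ 1, t, t², t³` are `1, 0, 1, 0`, so the two
constraints on `ξ = a + b t + c t²` read `a + c = 1` and `b = μ`. Nonnegativity of `ξ` means
`b² ≤ 4ac`, and `4ac ≤ (a + c)² = 1` by AM-GM, whence `|μ| ≤ 1`. Conversely, for `|μ| ≤ 1` the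
polynomial `((t + μ)² + 1 - μ²) / 2` satisfies all three conditions.
-/

open MeasureTheory ProbabilityTheory
open scoped NNReal

lemma sq_le_sq_add_of_forall_quadratic_nonneg {a b c : ℝ}
    (h : ∀ t : ℝ, 0 ≤ a + b * t + c * t ^ 2) : b ^ 2 ≤ (a + c) ^ 2 := by
  have hdiscrim : discrim c b a ≤ 0 := discrim_le_zero fun t ↦ by linarith [h t, sq t]
  rw [discrim] at hdiscrim
  nlinarith [sq_nonneg (a - c)]

namespace ProbabilityTheory

variable {m : ℝ} {v : ℝ≥0}

lemma integrable_pow_gaussianReal (n : ℕ) :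
    Integrable (fun x : ℝ ↦ x ^ n) (gaussianReal m v) :=
  integrable_pow_of_mem_interior_integrableExpSet (X := fun x ↦ x) (by simp) n

lemma integral_sq_gaussianReal : ∫ x, x ^ 2 ∂gaussianReal m v = v + m ^ 2 := by
  have h := variance_eq_sub (memLp_id_gaussianReal (μ := m) (v := v) 2)
  simp only [variance_id_gaussianReal, Pi.pow_apply, id_eq, integral_id_gaussianReal] at h
  linarith

/-- By invariance of the centred Gaussian under `x ↦ -x`. -/
lemma integral_pow_gaussianReal_zero_of_odd {n : ℕ} (hn : Odd n) :
    ∫ x, x ^ n ∂gaussianReal 0 v = 0 := by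
  have h := integral_map (μ := gaussianReal 0 v) (φ := fun x : ℝ ↦ -x) (by fun_prop)
    (f := fun x ↦ x ^ n) (by fun_prop)
  simp only [gaussianReal_map_neg, neg_zero, hn.neg_pow, integral_neg] at h
  linarith

lemma integral_quadratic_gaussianReal (a b c : ℝ) :
    ∫ t, (a + b * t + c * t ^ 2) ∂gaussianReal 0 v = a + c * v := by
  have i1 := (integrable_pow_gaussianReal (m := 0) (v := v) 1).const_mul b
  have i2 := (integrable_pow_gaussianReal (m := 0) (v := v) 2).const_mul c
  simp only [pow_one] at i1
  rw [integral_add ((integrable_const a).fun_add i1) i2, integral_add (integrable_const a) i1,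
    integral_const_mul, integral_const_mul, integral_id_gaussianReal, integral_sq_gaussianReal]
  simp

lemma integral_mul_quadratic_gaussianReal (a b c : ℝ) :
    ∫ t, t * (a + b * t + c * t ^ 2) ∂gaussianReal 0 v = b * v := by
  have i1 := (integrable_pow_gaussianReal (m := 0) (v := v) 1).const_mul a
  have i2 := (integrable_pow_gaussianReal (m := 0) (v := v) 2).const_mul b
  have i3 := (integrable_pow_gaussianReal (m := 0) (v := v) 3).const_mul c
  simp only [pow_one] at i1
  simp_rw [fun t : ℝ ↦ show t * (a + b * t + c * t ^ 2) = a * t + b * t ^ 2 + c * t ^ 3 by ring]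
  rw [integral_add (i1.fun_add i2) i3, integral_add i1 i2, integral_const_mul, integral_const_mul,
    integral_const_mul, integral_id_gaussianReal, integral_sq_gaussianReal,
    integral_pow_gaussianReal_zero_of_odd (by decide)]
  simp

end ProbabilityTheory

/-- Feasibility of the constrained quadratic Gaussian tilting
problem holds if and only if `-1 ≤ μ ≤ 1`. -/
theorem gaussian_tilt_feasibility (μ : ℝ)
    (z : Measure ℝ) (hz : z = ProbabilityTheory.gaussianReal 0 1) :
    (∃ a b c : ℝ, (∀ t : ℝ, 0 ≤ a + b * t + c * t ^ 2) ∧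
      (∫ t, (a + b * t + c * t ^ 2) ∂z) = 1 ∧
      (∫ t, t * (a + b * t + c * t ^ 2) ∂z) = μ) ↔ (-1 ≤ μ ∧ μ ≤ 1) := by
  subst hz
  simp only [integral_quadratic_gaussianReal, integral_mul_quadratic_gaussianReal,
    NNReal.coe_one, mul_one]
  constructor
  · rintro ⟨a, b, c, hnonneg, hmass, rfl⟩
    have hsq := sq_le_sq_add_of_forall_quadratic_nonneg hnonneg
    rw [hmass, one_pow, sq_le_one_iff_abs_le_one] at hsq
    exact abs_le.mp hsq
  · rintro ⟨hlow, hhigh⟩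
    refine ⟨1 / 2, μ, 1 / 2, fun t ↦ ?_, by norm_num, rfl⟩
    have hμ : 0 ≤ (1 - μ) * (1 + μ) := mul_nonneg (by linarith) (by linarith)
    nlinarith [sq_nonneg (t + μ)]
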